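/- arXiv:1805.09236 — 5 statements merged into one kernel-verified Lean document; each statement's English description precedes it below -/
import Mathlib

section
/- Let L be discrete Laplace with parameter b ∈ (0,1) (pmf p_L(x) = ((1−b)/(1+b)) b^{|x|} for x ∈ ℤ) and U uniform on (−1/2, 1/2), independent. Then the cdf of L + U is given by: F(x) = (b^{−[x]}/(1+b))(b + (x − [x] + 1/2)(1−b)) for x ≤ 0, and F(x) = 1 − (b^{[x]}/(1+b))(b + ([x] − x + 1/2)(1−b)) for x > 0, where [x] denotes the nearest integer to x. -/
/-!
Conditioning on the value of `L`, independence gives `P(L + U ≤ x) = ∑_z p(z) F_U(x - z)`, where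
`F_U` is the cdf of `U`. For `n = round x` the weight `F_U(x - z)` is `1` for `z < n`,
`x - n + 1/2` for `z = n` and `0` for `z > n`, so the cdf is the discrete Laplace mass of
`(-∞, n)` plus a fraction of `p(n)`; that mass is a geometric tail, which gives the closed form.
-/

open MeasureTheory Real ProbabilityTheory

/-- cdf of `Tulap(0,b,0)`, the distribution of `DLap(b) + Unif(-1/2,1/2)`. -/
noncomputable def tulapCdf0 (b : ℝ) (x : ℝ) : ℝ :=
  if x ≤ 0 then b ^ (-(round x)) / (1 + b) * (b + (x - round x + 1/2) * (1 - b))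
  else 1 - b ^ (round x) / (1 + b) * (b + ((round x : ℝ) - x + 1/2) * (1 - b))

open Set

theorem measure_intCast_add_le_eq_tsum {Ω : Type*} [MeasurableSpace Ω] {P : Measure Ω}
    {L : Ω → ℤ} {U : Ω → ℝ} (hLm : Measurable L) (hUm : Measurable U) (hind : IndepFun L U P)
    (x : ℝ) :
    P {ω | (L ω : ℝ) + U ω ≤ x} = ∑' z : ℤ, P {ω | L ω = z} * P (U ⁻¹' Iic (x - z)) := by
  have hunion : {ω | (L ω : ℝ) + U ω ≤ x} = ⋃ z : ℤ, L ⁻¹' {z} ∩ U ⁻¹' Iic (x - z) := by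
    ext ω
    simp only [mem_ofPred_eq, mem_iUnion, mem_inter_iff, mem_preimage, mem_singleton_iff,
      mem_Iic, exists_eq_left', le_sub_iff_add_le']
  rw [hunion, measure_iUnion]
  · exact tsum_congr fun z ↦
      hind.measure_inter_preimage_eq_mul _ _ (measurableSet_singleton z) measurableSet_Iic
  · exact fun z z' h ↦ (pairwise_disjoint_fiber L h).mono inter_subset_left inter_subset_left
  · exact fun z ↦ (hLm (measurableSet_singleton z)).inter (hUm measurableSet_Iic)

theorem volume_Iic_inter_Ioo (a b c : ℝ) :
    volume (Iic c ∩ Ioo a b) = ENNReal.ofReal (min c b - a) := by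
  rw [measure_congr ((ae_eq_refl (Iic c)).inter Ioo_ae_eq_Ioc), inter_comm, Ioc_inter_Iic,
    volume_Ioc, inf_comm]

noncomputable def uniformCdf (c : ℝ) : ℝ := max (min c (1/2) + 1/2) 0

theorem toReal_volume_Iic_inter_Ioo_half (c : ℝ) :
    (volume (Iic c ∩ Ioo (-(1:ℝ)/2) (1/2))).toReal = uniformCdf c := by
  rw [volume_Iic_inter_Ioo, ENNReal.toReal_ofReal', uniformCdf]
  ring_nf

theorem uniformCdf_sub_intCast (x : ℝ) (z : ℤ) :
    uniformCdf (x - z) =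
      if z < round x then 1 else if z = round x then x - round x + 1/2 else 0 := by
  have hlow := round_le_add_half x
  have hupp := sub_half_lt_round x
  rcases lt_trichotomy z (round x) with h | rfl | h
  · have : (z : ℝ) + 1 ≤ round x := by exact_mod_cast h
    rw [if_pos h, uniformCdf, min_eq_right (by linarith)]
    norm_num
  · rw [if_neg (lt_irrefl _), if_pos rfl, uniformCdf, min_eq_left (by linarith),
      max_eq_left (by linarith)]
  · have : (round x : ℝ) + 1 ≤ z := by exact_mod_cast h
    rw [if_neg h.not_gt, if_neg h.ne', uniformCdf, min_eq_left (by linarith),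
      max_eq_right (by linarith)]

noncomputable def dlapPmf (b : ℝ) (z : ℤ) : ℝ := (1 - b) / (1 + b) * b ^ z.natAbs

section dlapPmf

variable {b : ℝ}

theorem dlapPmf_neg (z : ℤ) : dlapPmf b (-z) = dlapPmf b z := by
  simp only [dlapPmf, Int.natAbs_neg]

theorem hasSum_dlapPmf_Ici (hb0 : 0 ≤ b) (hb1 : b < 1) (j : ℕ) :
    HasSum ((Ici (j : ℤ)).indicator (dlapPmf b)) (b ^ j / (1 + b)) := by
  have hinj : Function.Injective fun k : ℕ ↦ (j : ℤ) + k := fun k k' h ↦ by simpa using h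
  rw [← hinj.hasSum_iff]
  · have hterm : ∀ k : ℕ, (Ici (j : ℤ)).indicator (dlapPmf b) (j + k) =
        (1 - b) / (1 + b) * b ^ j * b ^ k := fun k ↦ by
      rw [indicator_of_mem (by simp), dlapPmf, ← Nat.cast_add, Int.natAbs_natCast, pow_add,
        mul_assoc]
    have hgeom := (hasSum_geometric_of_lt_one hb0 hb1).mul_left ((1 - b) / (1 + b) * b ^ j)
    rwa [show (1 - b) / (1 + b) * b ^ j * (1 - b)⁻¹ = b ^ j / (1 + b) by
      field_simp [(by linarith : (1 : ℝ) - b ≠ 0)], ← funext hterm] at hgeom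
  · intro z hz
    refine indicator_of_notMem (fun hjz ↦ hz ⟨(z - j).toNat, ?_⟩) _
    simp only [mem_Ici] at hjz
    show (j : ℤ) + ((z - j).toNat : ℤ) = z
    omega

theorem hasSum_dlapPmf_Iio_neg (hb0 : 0 ≤ b) (hb1 : b < 1) (j : ℕ) :
    HasSum ((Iio (-(j : ℤ))).indicator (dlapPmf b)) (b ^ (j + 1) / (1 + b)) := by
  rw [← (Equiv.neg ℤ).hasSum_iff]
  convert hasSum_dlapPmf_Ici hb0 hb1 (j + 1) using 1
  ext z
  simp only [Function.comp_apply, Equiv.neg_apply, indicator_apply, mem_Iio, mem_Ici,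
    dlapPmf_neg, neg_lt_neg_iff, Nat.cast_succ, Int.add_one_le_iff]

theorem hasSum_dlapPmf (hb0 : 0 ≤ b) (hb1 : b < 1) : HasSum (dlapPmf b) 1 := by
  rw [← indicator_self_add_compl (Ici 0) (dlapPmf b), compl_Ici]
  convert (hasSum_dlapPmf_Ici hb0 hb1 0).add (hasSum_dlapPmf_Iio_neg hb0 hb1 0) using 1
  · rfl
  · field_simp [(by linarith : (1 : ℝ) + b ≠ 0)]
    ring

theorem hasSum_dlapPmf_Iio (hb0 : 0 ≤ b) (hb1 : b < 1) (j : ℕ) :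
    HasSum ((Iio (j : ℤ)).indicator (dlapPmf b)) (1 - b ^ j / (1 + b)) := by
  rw [← compl_Ici, indicator_compl]
  exact (hasSum_dlapPmf hb0 hb1).sub (hasSum_dlapPmf_Ici hb0 hb1 j)

end dlapPmf

theorem hasSum_dlapPmf_mul_uniformCdf {b : ℝ} (hb0 : 0 ≤ b) (hb1 : b < 1) (x : ℝ) :
    HasSum (fun z : ℤ ↦ dlapPmf b z * uniformCdf (x - z)) (tulapCdf0 b x) := by
  have hsplit : (fun z : ℤ ↦ dlapPmf b z * uniformCdf (x - z)) =
      (Iio (round x)).indicator (dlapPmf b) +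
        Pi.single (round x) ((x - round x + 1/2) * dlapPmf b (round x)) := by
    ext z
    rw [uniformCdf_sub_intCast]
    rcases lt_trichotomy z (round x) with h | rfl | h
    · simp [h, h.ne]
    · simp [mul_comm]
    · simp [h.not_gt, h.ne']
  have hb : (1 : ℝ) + b ≠ 0 := by linarith
  rw [hsplit]
  rcases le_or_gt x 0 with hx | hx
  · obtain ⟨j, hj⟩ : ∃ j : ℕ, round x = -j := Int.exists_eq_neg_ofNat (by
      have : (round x : ℝ) < 1 := by linarith [round_le_add_half x]
      have : round x < 1 := by exact_mod_cast this
      omega)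
    rw [tulapCdf0, if_pos hx, hj]
    convert (hasSum_dlapPmf_Iio_neg hb0 hb1 j).add (hasSum_pi_single _ _) using 1
    · rfl
    simp only [dlapPmf, neg_neg, zpow_natCast, Int.natAbs_neg, Int.natAbs_natCast, Int.cast_neg,
      Int.cast_natCast]
    field_simp
    ring
  · obtain ⟨j, hj⟩ : ∃ j : ℕ, round x = j := Int.eq_ofNat_of_zero_le (by
      have : (-1 : ℝ) < round x := by linarith [sub_half_lt_round x]
      have : -1 < round x := by exact_mod_cast this
      omega)
    rw [tulapCdf0, if_neg hx.not_ge, hj]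
    convert (hasSum_dlapPmf_Iio hb0 hb1 j).add (hasSum_pi_single _ _) using 1
    · rfl
    simp only [dlapPmf, zpow_natCast, Int.natAbs_natCast, Int.cast_natCast]
    field_simp
    ring

/-- if `L ~ DLap(b)` and `U ~ Unif(-1/2,1/2)` are independent, then the cdf
of `L + U` is the Tulap(0,b,0) cdf. -/
theorem dlap_add_unif_cdf (b : ℝ) (hb : b ∈ Set.Ioo (0:ℝ) 1)
    {Ω : Type*} [MeasurableSpace Ω] (P : Measure Ω) [IsProbabilityMeasure P]
    (L : Ω → ℤ) (U : Ω → ℝ) (hLm : Measurable L) (hUm : Measurable U)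
    (hL : ∀ z : ℤ, (P {ω | L ω = z}).toReal = (1 - b) / (1 + b) * b ^ z.natAbs)
    (hU : ∀ s : Set ℝ, MeasurableSet s →
      P (U ⁻¹' s) = volume (s ∩ Set.Ioo (-(1:ℝ)/2) (1/2)))
    (hind : IndepFun L U P) :
    ∀ x : ℝ, (P {ω | (L ω : ℝ) + U ω ≤ x}).toReal = tulapCdf0 b x := by
  intro x
  rw [measure_intCast_add_le_eq_tsum hLm hUm hind,
    ENNReal.tsum_toReal_eq fun z ↦ ENNReal.mul_ne_top (measure_ne_top _ _) (measure_ne_top _ _)]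
  simp only [ENNReal.toReal_mul, hL, hU _ measurableSet_Iic, toReal_volume_Iic_inter_Ioo_half]
  exact (hasSum_dlapPmf_mul_uniformCdf hb.1.le hb.2 x).tsum_eq
end

section
/- If G₁ and G₂ are independent geometric random variables each with success probability 1 − b (pmf p(x) = (1−p)^x p with p = 1−b, supported on {0,1,2,...}), then G₁ − G₂ has the discrete Laplace distribution with parameter b, i.e., P(G₁ − G₂ = x) = ((1−b)/(1+b)) b^{|x|} for all x ∈ ℤ. -/
open MeasureTheory Real ProbabilityTheory

theorem aux_geom_diff (b : ℝ) (hb : b ∈ Set.Ioo (0:ℝ) 1)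
    {Ω : Type*} [MeasurableSpace Ω] (P : Measure Ω) [IsProbabilityMeasure P]
    (G₁ G₂ : Ω → ℕ) (hG₁m : Measurable G₁) (hG₂m : Measurable G₂)
    (hG₁ : ∀ k : ℕ, (P {ω | G₁ ω = k}).toReal = b ^ k * (1 - b))
    (hG₂ : ∀ k : ℕ, (P {ω | G₂ ω = k}).toReal = b ^ k * (1 - b))
    (hind : IndepFun G₁ G₂ P) (a : ℕ) :
    (P {ω | (G₁ ω : ℤ) - (G₂ ω : ℤ) = (a:ℤ)}).toReal = (1 - b) / (1 + b) * b ^ a := by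
  obtain ⟨hb0, hb1⟩ := hb
  have hset : {ω | (G₁ ω : ℤ) - (G₂ ω : ℤ) = (a:ℤ)}
      = ⋃ n : ℕ, (G₁ ⁻¹' {n + a} ∩ G₂ ⁻¹' {n}) := by
    ext ω
    simp only [Set.mem_setOf_eq, Set.mem_iUnion, Set.mem_inter_iff, Set.mem_preimage,
      Set.mem_singleton_iff]
    constructor
    · intro h
      exact ⟨G₂ ω, by omega, rfl⟩
    · rintro ⟨n, h1, h2⟩
      omega
  have hdisj : Pairwise (Function.onFun Disjoint
      fun n : ℕ => G₁ ⁻¹' {n + a} ∩ G₂ ⁻¹' {n}) := by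
    intro i j hij
    rw [Function.onFun, Set.disjoint_left]
    rintro ω ⟨-, h2⟩ ⟨-, h4⟩
    exact hij (h2.symm.trans h4)
  have hmeas : ∀ n : ℕ, MeasurableSet (G₁ ⁻¹' {n + a} ∩ G₂ ⁻¹' {n}) :=
    fun n => (hG₁m (measurableSet_singleton _)).inter (hG₂m (measurableSet_singleton _))
  rw [hset, measure_iUnion hdisj hmeas,
    ENNReal.tsum_toReal_eq (fun n => measure_ne_top P _)]
  have hterm : ∀ n : ℕ, (P (G₁ ⁻¹' {n + a} ∩ G₂ ⁻¹' {n})).toReal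
      = ((1 - b) ^ 2 * b ^ a) * (b ^ 2) ^ n := by
    intro n
    rw [hind.measure_inter_preimage_eq_mul _ _ (measurableSet_singleton _)
      (measurableSet_singleton _), ENNReal.toReal_mul]
    have e1 : (P (G₁ ⁻¹' {n + a})).toReal = b ^ (n + a) * (1 - b) := hG₁ (n + a)
    have e2 : (P (G₂ ⁻¹' {n})).toReal = b ^ n * (1 - b) := hG₂ n
    rw [e1, e2, pow_add, show ((b^2)^n : ℝ) = b^n * b^n by rw [sq, mul_pow]]
    ring
  rw [tsum_congr hterm, tsum_mul_left, tsum_geometric_of_lt_one (by positivity)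
    (by nlinarith)]
  have h2 : 1 - b ^ 2 = (1 - b) * (1 + b) := by ring
  rw [h2]
  have hne1 : (1:ℝ) - b ≠ 0 := by linarith
  have hne2 : (1:ℝ) + b ≠ 0 := by linarith
  field_simp

/-- the difference of two independent Geometric(1-b) random variables
has the discrete Laplace distribution with parameter b. -/
theorem geom_diff_discrete_laplace (b : ℝ) (hb : b ∈ Set.Ioo (0:ℝ) 1)
    {Ω : Type*} [MeasurableSpace Ω] (P : Measure Ω) [IsProbabilityMeasure P]
    (G₁ G₂ : Ω → ℕ) (hG₁m : Measurable G₁) (hG₂m : Measurable G₂)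
    (hG₁ : ∀ k : ℕ, (P {ω | G₁ ω = k}).toReal = b ^ k * (1 - b))
    (hG₂ : ∀ k : ℕ, (P {ω | G₂ ω = k}).toReal = b ^ k * (1 - b))
    (hind : IndepFun G₁ G₂ P) :
    ∀ x : ℤ, (P {ω | (G₁ ω : ℤ) - (G₂ ω : ℤ) = x}).toReal
      = (1 - b) / (1 + b) * b ^ x.natAbs := by
  intro x
  cases x with
  | ofNat a =>
      simpa using aux_geom_diff b hb P G₁ G₂ hG₁m hG₂m hG₁ hG₂ hind a
  | negSucc a =>
      have hset : {ω | (G₁ ω : ℤ) - (G₂ ω : ℤ) = Int.negSucc a}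
          = {ω | (G₂ ω : ℤ) - (G₁ ω : ℤ) = ((a + 1 : ℕ) : ℤ)} := by
        ext ω
        simp only [Set.mem_setOf_eq, Int.negSucc_eq]
        omega
      rw [hset, aux_geom_diff b hb P G₂ G₁ hG₂m hG₁m hG₂ hG₁ hind.symm (a + 1)]
      norm_num [Int.natAbs]
end

section
/- Let ε > 0, b = e^{−ε}, and φ : {0,...,n} → (0,1). The following are equivalent: (1) there exists m ∈ (0,1) with φ₀ = m and φ_x = min{e^ε φ_{x−1}, 1 − e^{−ε}(1 − φ_{x−1})} for x = 1,...,n; (2) there exists m ∈ (0,1) with φ₀ = m and φ_x = e^ε φ_{x−1} if φ_{x−1} ≤ 1/(1+e^ε), and φ_x = 1 − e^{−ε}(1 − φ_{x−1}) if φ_{x−1} > 1/(1+e^ε); (3) there exists m ∈ ℝ such that φ_x = F_{N₀}(x − m) for all x, where N₀ ~ Tulap(0, b, 0). -/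
/-!
Shifting the argument of the Tulap cdf `F` by one acts on its value by the step map of the
case-split recurrence: for `x ≤ -1/2` (exactly where `F x ≤ b/(1+b)`) the lower-branch formula
`b^(-[x]) (…)` gets multiplied by `1/b`, and for `x ≥ -1/2` the upper tail `1 - F x` gets
multiplied by `b`. Since `F` maps onto `(0,1)`, every starting value `φ 0` is `F (-m)` for some
`m`, and the recurrence then forces `φ x = F (x - m)`. The `min` recurrence is the same one because
its two candidates cross exactly at `t = 1/(1+e^ε)`.
-/

open Real

/-- The two branches of `tulapCdf0`. Each formula stays valid half a unit beyond the branch point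
`0` (they agree on `[-1/2, 1/2]`), which lets the shift rules below cross it. -/
noncomputable def tulapCdf0Left (b x : ℝ) : ℝ :=
  b ^ (-(round x)) / (1 + b) * (b + (x - round x + 1/2) * (1 - b))

noncomputable def tulapCdf0Right (b x : ℝ) : ℝ :=
  1 - b ^ (round x) / (1 + b) * (b + ((round x : ℝ) - x + 1/2) * (1 - b))

lemma tulapCdf0Left_add_one {b : ℝ} (hb : b ≠ 0) (x : ℝ) :
    tulapCdf0Left b (x + 1) = b⁻¹ * tulapCdf0Left b x := by
  rw [tulapCdf0Left, tulapCdf0Left, round_add_one, neg_add', zpow_sub_one₀ hb]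
  push_cast
  ring

lemma tulapCdf0Right_add_one {b : ℝ} (hb : b ≠ 0) (x : ℝ) :
    1 - tulapCdf0Right b (x + 1) = b * (1 - tulapCdf0Right b x) := by
  rw [tulapCdf0Right, tulapCdf0Right, round_add_one, zpow_add_one₀ hb]
  push_cast
  ring

lemma tulapCdf0Left_eq_right {b x : ℝ} (hb : 0 < b) (hx : x ∈ Set.Icc (-(1/2)) (1/2)) :
    tulapCdf0Left b x = tulapCdf0Right b x := by
  have : 1 + b ≠ 0 := by positivity
  rcases hx.2.lt_or_eq with hlt | rfl
  · rw [tulapCdf0Left, tulapCdf0Right, round_eq_zero_iff.mpr ⟨hx.1, hlt⟩, neg_zero, zpow_zero]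
    field_simp
    ring
  · rw [tulapCdf0Left, tulapCdf0Right, show round (1/2 : ℝ) = 1 by norm_num [round_eq]]
    field_simp
    ring

lemma tulapCdf0_eq_left {b x : ℝ} (hb : 0 < b) (hx : x ≤ 1/2) :
    tulapCdf0 b x = tulapCdf0Left b x := by
  by_cases h : x ≤ 0
  · rw [tulapCdf0, if_pos h, tulapCdf0Left]
  · rw [tulapCdf0, if_neg h, ← tulapCdf0Right,
      tulapCdf0Left_eq_right hb ⟨by linarith, hx⟩]

lemma tulapCdf0_eq_right {b x : ℝ} (hb : 0 < b) (hx : -(1/2) ≤ x) :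
    tulapCdf0 b x = tulapCdf0Right b x := by
  by_cases h : x ≤ 0
  · rw [tulapCdf0, if_pos h, ← tulapCdf0Left,
      tulapCdf0Left_eq_right hb ⟨hx, by linarith⟩]
  · rw [tulapCdf0, if_neg h, tulapCdf0Right]

lemma tulapCdf0_of_mem_Icc {b x : ℝ} (hb : 0 < b) (hx : x ∈ Set.Icc (-(1/2)) (1/2)) :
    tulapCdf0 b x = (b + (x + 1/2) * (1 - b)) / (1 + b) := by
  have : 1 + b ≠ 0 := by positivity
  rw [tulapCdf0_eq_left hb hx.2]
  rcases hx.2.lt_or_eq with hlt | rfl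
  · rw [tulapCdf0Left, round_eq_zero_iff.mpr ⟨hx.1, hlt⟩, neg_zero, zpow_zero]
    field_simp
    ring
  · rw [tulapCdf0Left, show round (1/2 : ℝ) = 1 by norm_num [round_eq]]
    field_simp
    ring

lemma tulapCdf0_add_one_of_le {b x : ℝ} (hb : 0 < b) (hx : x ≤ -(1/2)) :
    tulapCdf0 b (x + 1) = b⁻¹ * tulapCdf0 b x := by
  rw [tulapCdf0_eq_left hb (by linarith), tulapCdf0_eq_left hb (by linarith),
    tulapCdf0Left_add_one hb.ne']

lemma tulapCdf0_add_one_of_ge {b x : ℝ} (hb : 0 < b) (hx : -(1/2) ≤ x) :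
    tulapCdf0 b (x + 1) = 1 - b * (1 - tulapCdf0 b x) := by
  rw [tulapCdf0_eq_right hb (by linarith), tulapCdf0_eq_right hb hx,
    ← tulapCdf0Right_add_one hb.ne']
  ring

lemma tulapCdf0_sub_natCast {b x : ℝ} (hb : 0 < b) (hx : x ≤ 1/2) (j : ℕ) :
    tulapCdf0 b (x - j) = b ^ j * tulapCdf0 b x := by
  induction j with
  | zero => simp
  | succ k ih =>
    have hk : x - (k + 1 : ℕ) + 1 = x - k := by push_cast; ring
    have hstep := tulapCdf0_add_one_of_le hb (x := x - (k + 1 : ℕ)) (by push_cast; linarith)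
    rw [hk, ih] at hstep
    rw [pow_succ', mul_assoc, hstep, mul_inv_cancel_left₀ hb.ne']

lemma one_sub_tulapCdf0_add_natCast {b x : ℝ} (hb : 0 < b) (hx : -(1/2) ≤ x) (j : ℕ) :
    1 - tulapCdf0 b (x + j) = b ^ j * (1 - tulapCdf0 b x) := by
  induction j with
  | zero => simp
  | succ k ih =>
    have hk : -(1/2) ≤ x + k := by linarith [(Nat.cast_nonneg k : (0:ℝ) ≤ k)]
    rw [Nat.cast_succ, ← add_assoc, tulapCdf0_add_one_of_ge hb hk, pow_succ]
    linear_combination b * ih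

lemma zpow_mul_add_mul_one_sub_le {b s : ℝ} {k : ℤ} (hb0 : 0 < b) (hb1 : b ≤ 1) (hk : 1 ≤ k)
    (hs : s ∈ Set.Icc 0 1) : b ^ k * (b + s * (1 - b)) ≤ b := by
  have hpow : b ^ k ≤ b := by simpa using zpow_le_zpow_right_of_le_one₀ hb0 hb1 hk
  calc b ^ k * (b + s * (1 - b)) ≤ b * 1 := by
        gcongr
        · nlinarith [hs.1]
        · nlinarith [hs.2]
    _ = b := mul_one b

lemma tulapCdf0_le_of_le {b x : ℝ} (hb0 : 0 < b) (hb1 : b ≤ 1) (hx : x ≤ -(1/2)) :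
    tulapCdf0 b x ≤ b / (1 + b) := by
  rcases hx.lt_or_eq with hx | rfl
  · have hr : round x ≤ -1 := by
      have : (round x : ℝ) < 0 := by linarith [round_le_add_half x]
      exact Int.le_sub_one_of_lt (by exact_mod_cast this)
    have hfrac := abs_le.mp (abs_sub_round x)
    rw [tulapCdf0_eq_left hb0 (by linarith), tulapCdf0Left, div_mul_eq_mul_div]
    gcongr
    exact zpow_mul_add_mul_one_sub_le hb0 hb1 (by omega) ⟨by linarith, by linarith⟩
  · rw [tulapCdf0_of_mem_Icc hb0 (by norm_num)]
    norm_num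

lemma lt_tulapCdf0_of_lt {b x : ℝ} (hb0 : 0 < b) (hb1 : b < 1) (hx : -(1/2) < x) :
    b / (1 + b) < tulapCdf0 b x := by
  by_cases hx' : x ≤ 1/2
  · rw [tulapCdf0_of_mem_Icc hb0 ⟨hx.le, hx'⟩]
    gcongr
    nlinarith
  · have hr : 1 ≤ round x := by
      have : (0 : ℝ) < round x := by linarith [sub_half_lt_round x]
      exact_mod_cast this
    have hfrac := abs_le.mp (abs_sub_round x)
    have htail : b ^ round x / (1 + b) * (b + ((round x : ℝ) - x + 1/2) * (1 - b)) ≤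
        b / (1 + b) := by
      rw [div_mul_eq_mul_div]
      gcongr
      exact zpow_mul_add_mul_one_sub_le hb0 hb1.le hr ⟨by linarith, by linarith⟩
    have hhalf : b / (1 + b) < 1 / 2 := by
      rw [div_lt_iff₀ (by linarith)]
      linarith
    rw [tulapCdf0_eq_right hb0 hx.le, tulapCdf0Right]
    linarith

lemma tulapCdf0_le_iff {b x : ℝ} (hb0 : 0 < b) (hb1 : b < 1) :
    tulapCdf0 b x ≤ b / (1 + b) ↔ x ≤ -(1/2) :=
  ⟨fun h => not_lt.mp fun hx => (lt_tulapCdf0_of_lt hb0 hb1 hx).not_ge h,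
    tulapCdf0_le_of_le hb0 hb1.le⟩

lemma exists_tulapCdf0_eq_of_mem_Icc {b s : ℝ} (hb0 : 0 < b) (hb1 : b < 1)
    (hs : s ∈ Set.Icc (b / (1 + b)) (1 / (1 + b))) :
    ∃ x ∈ Set.Icc (-(1/2)) (1/2), tulapCdf0 b x = s := by
  have h1b : 0 < 1 + b := by linarith
  have h1b' : 0 < 1 - b := by linarith
  obtain ⟨hs1, hs2⟩ := hs
  rw [div_le_iff₀' h1b] at hs1
  rw [le_div_iff₀' h1b] at hs2
  have hlo : 0 ≤ ((1 + b) * s - b) / (1 - b) := div_nonneg (by linarith) h1b'.le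
  have hhi : ((1 + b) * s - b) / (1 - b) ≤ 1 := (div_le_one h1b').mpr (by linarith)
  have hx : ((1 + b) * s - b) / (1 - b) - 1/2 ∈ Set.Icc (-(1/2)) (1/2) :=
    ⟨by linarith, by linarith⟩
  refine ⟨_, hx, ?_⟩
  rw [tulapCdf0_of_mem_Icc hb0 hx]
  field_simp
  ring

lemma div_pow_mem_Icc {b c : ℝ} {j : ℕ} (hb : 0 < b) (hlo : b ^ (j + 1) ≤ (1 + b) * c)
    (hhi : (1 + b) * c ≤ b ^ j) : c / b ^ j ∈ Set.Icc (b / (1 + b)) (1 / (1 + b)) :=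
  ⟨by rw [div_le_div_iff₀ (by positivity) (by positivity)]; linarith [pow_succ' b j],
    by rw [div_le_div_iff₀ (by positivity) (by positivity)]; linarith⟩

lemma exists_tulapCdf0_eq {b t : ℝ} (hb0 : 0 < b) (hb1 : b < 1) (ht : t ∈ Set.Ioo 0 1) :
    ∃ x, tulapCdf0 b x = t := by
  -- write `t` (in the upper tail, `1 - t`) as `b ^ j` times a value taken on `[-1/2, 1/2]`
  by_cases hlow : (1 + b) * t ≤ 1
  · obtain ⟨j, hj1, hj2⟩ := exists_nat_pow_near_of_lt_one (by nlinarith [ht.1]) hlow hb0 hb1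
    obtain ⟨x, hx, hFx⟩ := exists_tulapCdf0_eq_of_mem_Icc hb0 hb1
      (div_pow_mem_Icc hb0 hj1.le hj2)
    refine ⟨x - j, ?_⟩
    rw [tulapCdf0_sub_natCast hb0 hx.2, hFx]
    field_simp
  · obtain ⟨j, hj1, hj2⟩ := exists_nat_pow_near_of_lt_one (x := (1 + b) * (1 - t))
      (by nlinarith [ht.2]) (by nlinarith) hb0 hb1
    have hsum : b / (1 + b) + 1 / (1 + b) = 1 := by field_simp; ring
    have hmem := div_pow_mem_Icc hb0 hj1.le hj2
    obtain ⟨x, hx, hFx⟩ := exists_tulapCdf0_eq_of_mem_Icc hb0 hb1 (s := 1 - (1 - t) / b ^ j)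
      ⟨by linarith [hmem.2], by linarith [hmem.1]⟩
    refine ⟨x + j, ?_⟩
    have := one_sub_tulapCdf0_add_natCast hb0 hx.1 j
    rw [hFx] at this
    field_simp at this
    linarith

noncomputable def dpStep (E t : ℝ) : ℝ :=
  if t ≤ 1 / (1 + E) then E * t else 1 - E⁻¹ * (1 - t)

lemma min_eq_dpStep {E : ℝ} (hE : 1 ≤ E) (t : ℝ) :
    min (E * t) (1 - E⁻¹ * (1 - t)) = dpStep E t := by
  have hE0 : 0 < E := by linarith
  have hE1 : 0 < 1 + E := by linarith
  have hdiff : E * t - (1 - E⁻¹ * (1 - t)) = (E - 1) * (t * (1 + E) - 1) / E := by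
    field_simp
    ring
  unfold dpStep
  split_ifs with h
  · rw [le_div_iff₀ hE1] at h
    refine min_eq_left (sub_nonpos.mp ?_)
    rw [hdiff]
    exact div_nonpos_of_nonpos_of_nonneg (mul_nonpos_of_nonneg_of_nonpos (by linarith)
      (by linarith)) hE0.le
  · rw [not_le, div_lt_iff₀ hE1] at h
    refine min_eq_right (sub_nonneg.mp ?_)
    rw [hdiff]
    exact div_nonneg (mul_nonneg (by linarith) (by linarith)) hE0.le

lemma tulapCdf0_add_one {b : ℝ} (hb0 : 0 < b) (hb1 : b < 1) (x : ℝ) :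
    tulapCdf0 b (x + 1) = dpStep b⁻¹ (tulapCdf0 b x) := by
  have hthreshold : 1 / (1 + b⁻¹) = b / (1 + b) := by
    field_simp
    ring
  rw [dpStep, hthreshold, inv_inv]
  split_ifs with hx <;> rw [tulapCdf0_le_iff hb0 hb1] at hx
  · exact tulapCdf0_add_one_of_le hb0 hx
  · exact tulapCdf0_add_one_of_ge hb0 (not_le.mp hx).le

lemma exists_eq_tulapCdf0_of_dpStep {E : ℝ} (hE : 1 < E) {n : ℕ} {φ : ℕ → ℝ}
    (h0 : φ 0 ∈ Set.Ioo 0 1) (h : ∀ x, 1 ≤ x → x ≤ n → φ x = dpStep E (φ (x - 1))) :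
    ∃ m : ℝ, ∀ x ≤ n, φ x = tulapCdf0 E⁻¹ (x - m) := by
  have hb0 : 0 < E⁻¹ := by positivity
  have hb1 : E⁻¹ < 1 := inv_lt_one_of_one_lt₀ hE
  obtain ⟨x₀, hx₀⟩ := exists_tulapCdf0_eq hb0 hb1 h0
  refine ⟨-x₀, fun x hx => ?_⟩
  induction x with
  | zero => simp [hx₀]
  | succ k ih =>
    rw [h (k + 1) (by omega) hx, Nat.add_sub_cancel, ih (by omega), Nat.cast_succ,
      add_sub_right_comm, tulapCdf0_add_one hb0 hb1, inv_inv]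

lemma dpStep_of_eq_tulapCdf0 {E : ℝ} (hE : 1 < E) {n : ℕ} {φ : ℕ → ℝ} {m : ℝ}
    (h : ∀ x ≤ n, φ x = tulapCdf0 E⁻¹ (x - m)) :
    ∀ x, 1 ≤ x → x ≤ n → φ x = dpStep E (φ (x - 1)) := by
  intro x hx1 hxn
  obtain ⟨k, rfl⟩ := Nat.exists_eq_add_of_le' hx1
  rw [Nat.add_sub_cancel, h _ hxn, h k (by omega), Nat.cast_succ, add_sub_right_comm,
    tulapCdf0_add_one (by positivity) (inv_lt_one_of_one_lt₀ hE), inv_inv]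

/-- three equivalent characterizations of the extremal (ε,0)-DP test:
the `min` recurrence, the case-split recurrence, and the Tulap(0, e^(-ε), 0) cdf form. -/
theorem dp_recurrence_tfae (ε : ℝ) (hε : 0 < ε) (n : ℕ) (φ : ℕ → ℝ)
    (hφ : ∀ x ≤ n, φ x ∈ Set.Ioo (0:ℝ) 1) :
    ((∃ m ∈ Set.Ioo (0:ℝ) 1, φ 0 = m ∧ ∀ x, 1 ≤ x → x ≤ n →
        φ x = min (Real.exp ε * φ (x-1)) (1 - Real.exp (-ε) * (1 - φ (x-1)))) ↔
      (∃ m ∈ Set.Ioo (0:ℝ) 1, φ 0 = m ∧ ∀ x, 1 ≤ x → x ≤ n →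
        φ x = if φ (x-1) ≤ 1 / (1 + Real.exp ε) then Real.exp ε * φ (x-1)
              else 1 - Real.exp (-ε) * (1 - φ (x-1))))
    ∧
    ((∃ m ∈ Set.Ioo (0:ℝ) 1, φ 0 = m ∧ ∀ x, 1 ≤ x → x ≤ n →
        φ x = if φ (x-1) ≤ 1 / (1 + Real.exp ε) then Real.exp ε * φ (x-1)
              else 1 - Real.exp (-ε) * (1 - φ (x-1))) ↔
      (∃ m : ℝ, ∀ x ≤ n, φ x = tulapCdf0 (Real.exp (-ε)) ((x : ℝ) - m))) := by
  have hE : 1 < Real.exp ε := Real.one_lt_exp_iff.mpr hε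
  simp only [Real.exp_neg, min_eq_dpStep hE.le]
  refine ⟨Iff.rfl, ⟨?_, ?_⟩⟩
  · rintro ⟨m, hm, rfl, hrec⟩
    exact exists_eq_tulapCdf0_of_dpStep hE hm hrec
  · rintro ⟨m, hm⟩
    exact ⟨φ 0, hφ 0 n.zero_le, rfl, dpStep_of_eq_tulapCdf0 hE hm⟩
end

section
/- Let ε > 0, α ∈ (0,1), 0 < θ₀ < θ₁ < 1, n ≥ 1, and X ~ Binom(n, θ). Let N₀ ~ Tulap(0, e^{−ε}, 0) and define φ*_x = F_{N₀}(x − m), where m is chosen so that E_{θ₀} φ*_X = α. Then φ* is the uniformly most powerful level-α test of H₀: θ = θ₀ versus H₁: θ = θ₁ among all tests φ : {0,...,n} → [0,1] satisfying the (ε,0)-DP constraints: for all x, φ_x ≤ e^ε φ_{x+1}, φ_{x+1} ≤ e^ε φ_x, 1 − φ_x ≤ e^ε(1 − φ_{x+1}), and 1 − φ_{x+1} ≤ e^ε(1 − φ_x). That is, any DP test φ with E_{θ₀} φ_X ≤ α has E_{θ₁} φ_X ≤ E_{θ₁} φ*_X. -/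
open Real Finset

/-- Binomial(n,θ) pmf. -/
noncomputable def binomPmf (n : ℕ) (θ : ℝ) (x : ℕ) : ℝ :=
  (n.choose x : ℝ) * θ ^ x * (1 - θ) ^ (n - x)

/-- Power of a randomized test `φ` on binomial data: `E_θ φ_X`. -/
noncomputable def binomPower (n : ℕ) (φ : ℕ → ℝ) (θ : ℝ) : ℝ :=
  ∑ x ∈ Finset.range (n + 1), φ x * binomPmf n θ x

/-- The (ε,0)-DP constraints (DP1)-(DP4) on a test for binomial data. -/
def IsDPTest (ε : ℝ) (n : ℕ) (φ : ℕ → ℝ) : Prop :=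
  ∀ x < n, φ x ≤ Real.exp ε * φ (x+1) ∧ φ (x+1) ≤ Real.exp ε * φ x ∧
    (1 - φ x) ≤ Real.exp ε * (1 - φ (x+1)) ∧ (1 - φ (x+1)) ≤ Real.exp ε * (1 - φ x)

section TulapCdf

variable {b t : ℝ}

lemma sub_round_add_half_mem_Icc (t : ℝ) : t - round t + 1 / 2 ∈ Set.Icc (0 : ℝ) 1 := by
  obtain ⟨h₁, h₂⟩ := round_eq_iff.mp (rfl : round t = round t)
  constructor <;> linarith

lemma round_sub_add_half_mem_Icc (t : ℝ) : (round t : ℝ) - t + 1 / 2 ∈ Set.Icc (0 : ℝ) 1 := by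
  obtain ⟨h₁, h₂⟩ := sub_round_add_half_mem_Icc t
  constructor <;> linarith

lemma add_mul_one_sub_mem_Icc (hb1 : b ≤ 1) {s : ℝ} (hs : s ∈ Set.Icc (0 : ℝ) 1) :
    b + s * (1 - b) ∈ Set.Icc b 1 :=
  ⟨by nlinarith [hs.1], by nlinarith [hs.2]⟩

/- The two branches of `tulapCdf0` agree when `round t = 0`, so the cdf can be split on the sign
of `round t` instead of that of `t`; the shift `t ↦ t + 1` then just shifts `round t`. -/
lemma tulapCdf0_of_round_nonpos (hb : 0 < b) (h : round t ≤ 0) :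
    tulapCdf0 b t = b ^ (-round t) / (1 + b) * (b + (t - round t + 1 / 2) * (1 - b)) := by
  unfold tulapCdf0
  split_ifs with ht
  · rfl
  · have h0 : round t = 0 := le_antisymm h (round_eq t ▸ Int.floor_nonneg.mpr (by linarith))
    rw [h0, neg_zero, zpow_zero]
    field_simp
    ring

lemma tulapCdf0_of_round_nonneg (hb : 0 < b) (h : 0 ≤ round t) :
    tulapCdf0 b t = 1 - b ^ round t / (1 + b) * (b + ((round t : ℝ) - t + 1 / 2) * (1 - b)) := by
  unfold tulapCdf0
  split_ifs with ht
  · have hlt : (round t : ℝ) < 1 := by linarith [round_le_add_half t]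
    have h0 : round t = 0 := by
      have : round t < 1 := by exact_mod_cast hlt
      omega
    rw [h0, neg_zero, zpow_zero]
    field_simp
    ring
  · rfl

lemma tulapCdf0_mem_Icc (hb : 0 < b) (hb1 : b ≤ 1) (t : ℝ) :
    tulapCdf0 b t ∈ Set.Icc (0 : ℝ) 1 := by
  rcases le_total (round t) 0 with hk | hk
  · have hbk : b ^ (-round t) ≤ 1 := zpow_le_one₀ hb hb1 (by omega)
    obtain ⟨hw₀, hw₁⟩ := add_mul_one_sub_mem_Icc hb1 (sub_round_add_half_mem_Icc t)
    rw [tulapCdf0_of_round_nonpos hb hk, div_mul_eq_mul_div, Set.mem_Icc, le_div_iff₀ (by positivity),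
      div_le_one (by positivity)]
    constructor <;> nlinarith [zpow_pos hb (-round t)]
  · have hbk : b ^ round t ≤ 1 := zpow_le_one₀ hb hb1 hk
    obtain ⟨hw₀, hw₁⟩ := add_mul_one_sub_mem_Icc hb1 (round_sub_add_half_mem_Icc t)
    rw [tulapCdf0_of_round_nonneg hb hk, div_mul_eq_mul_div, Set.mem_Icc, sub_nonneg, sub_le_self_iff,
      div_le_one (by positivity)]
    constructor
    · nlinarith [zpow_pos hb (round t)]
    · exact div_nonneg (mul_nonneg (zpow_pos hb _).le (by linarith)) (by positivity)

lemma tulapCdf0_add_one_s11 (hb : 0 < b) (hb1 : b ≤ 1) (t : ℝ) :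
    tulapCdf0 b (t + 1) = min (tulapCdf0 b t / b) (1 - b * (1 - tulapCdf0 b t)) := by
  have hround : round (t + 1) = round t + 1 := round_add_one t
  rcases lt_or_ge (round t) 0 with hk | hk
  · have hbk : b ^ (-round t) ≤ b := by
      simpa using zpow_le_zpow_right_of_le_one₀ hb hb1 (show (1 : ℤ) ≤ -round t by omega)
    obtain ⟨hw₀, hw₁⟩ := add_mul_one_sub_mem_Icc hb1 (sub_round_add_half_mem_Icc t)
    have hF : tulapCdf0 b t * (1 + b) ≤ b := by
      rw [tulapCdf0_of_round_nonpos hb hk.le, div_mul_eq_mul_div, div_mul_cancel₀ _ (by positivity)]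
      nlinarith [zpow_pos hb (-round t)]
    have hstep : tulapCdf0 b (t + 1) = tulapCdf0 b t / b := by
      rw [tulapCdf0_of_round_nonpos hb (by omega), tulapCdf0_of_round_nonpos hb hk.le, hround,
        neg_add, zpow_add₀ hb.ne', zpow_neg_one]
      push_cast
      field_simp
      ring
    rw [hstep, min_eq_left ((div_le_iff₀ hb).mpr (by nlinarith))]
  · have hbk : b ^ round t ≤ 1 := zpow_le_one₀ hb hb1 hk
    obtain ⟨hw₀, hw₁⟩ := add_mul_one_sub_mem_Icc hb1 (round_sub_add_half_mem_Icc t)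
    have hF : b ≤ tulapCdf0 b t * (1 + b) := by
      rw [tulapCdf0_of_round_nonneg hb hk, sub_mul, div_mul_eq_mul_div, div_mul_cancel₀ _ (by positivity)]
      nlinarith [zpow_pos hb (round t)]
    have hstep : tulapCdf0 b (t + 1) = 1 - b * (1 - tulapCdf0 b t) := by
      rw [tulapCdf0_of_round_nonneg hb (by omega), tulapCdf0_of_round_nonneg hb hk, hround,
        zpow_add_one₀ hb.ne']
      push_cast
      ring
    rw [hstep, min_eq_right ((le_div_iff₀ hb).mpr (by nlinarith))]

end TulapCdf

section DPTest

variable {ε : ℝ} {n : ℕ} {φ ψ : ℕ → ℝ}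

lemma le_one_sub_exp_neg_mul_iff {a c : ℝ} :
    c ≤ 1 - exp (-ε) * (1 - a) ↔ 1 - a ≤ exp ε * (1 - c) := by
  rw [exp_neg, inv_mul_eq_div, le_sub_comm, div_le_iff₀ (exp_pos ε), mul_comm]

lemma isDPTest_of_succ_eq_min (hε : 0 ≤ ε) (hψ01 : ∀ x, ψ x ∈ Set.Icc (0 : ℝ) 1)
    (hψ : ∀ x, ψ (x + 1) = min (exp ε * ψ x) (1 - exp (-ε) * (1 - ψ x))) :
    IsDPTest ε n ψ := by
  have he : 1 ≤ exp ε := one_le_exp hε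
  have he' : exp (-ε) ≤ 1 := exp_le_one_iff.mpr (by linarith)
  intro x _
  obtain ⟨h₀, h₁⟩ := hψ01 x
  obtain ⟨h₀', -⟩ := hψ01 (x + 1)
  have hmono : ψ x ≤ ψ (x + 1) := by
    rw [hψ x]
    exact le_min (by nlinarith) (by nlinarith)
  refine ⟨by nlinarith, (hψ x).trans_le (min_le_left _ _),
    le_one_sub_exp_neg_mul_iff.mp ((hψ x).trans_le (min_le_right _ _)), by nlinarith⟩

lemma IsDPTest.succ_le_of_le (h : IsDPTest ε n φ) {x : ℕ} (hx : x < n)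
    (hψ : ψ (x + 1) = min (exp ε * ψ x) (1 - exp (-ε) * (1 - ψ x))) (hle : φ x ≤ ψ x) :
    φ (x + 1) ≤ ψ (x + 1) := by
  obtain ⟨-, h₂, h₃, -⟩ := h x hx
  rw [hψ]
  exact le_min (h₂.trans (by gcongr))
    ((le_one_sub_exp_neg_mul_iff.mpr h₃).trans (by gcongr))

end DPTest

section SignChange

variable {n k : ℕ} {d p q : ℕ → ℝ}

lemma mul_sum_le_mul_sum_of_sign_change
    (hpq : ∀ x y, x ≤ y → y ≤ n → q x * p y ≤ q y * p x) (hk : k ≤ n)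
    (hneg : ∀ x < k, d x ≤ 0) (hpos : ∀ x, k ≤ x → x ≤ n → 0 ≤ d x) :
    q k * ∑ x ∈ range (n + 1), d x * p x ≤ p k * ∑ x ∈ range (n + 1), d x * q x := by
  rw [mul_sum, mul_sum]
  refine sum_le_sum fun x hx => ?_
  have hxn : x ≤ n := Nat.lt_succ_iff.mp (mem_range.mp hx)
  rcases lt_or_ge x k with hxk | hxk
  · nlinarith [hpq x k hxk.le hk, hneg x hxk]
  · nlinarith [hpq k x hxk hxn, hpos x hxk hxn]

lemma sum_mul_nonneg_of_sign_change
    (hpq : ∀ x y, x ≤ y → y ≤ n → q x * p y ≤ q y * p x)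
    (hp : ∀ x ≤ n, 0 < p x) (hq : ∀ x ≤ n, 0 ≤ q x)
    (hd : ∀ x < n, 0 ≤ d x → 0 ≤ d (x + 1))
    (hdp : 0 ≤ ∑ x ∈ range (n + 1), d x * p x) :
    0 ≤ ∑ x ∈ range (n + 1), d x * q x := by
  classical
  by_cases hex : ∃ k, k ≤ n ∧ 0 ≤ d k
  · obtain ⟨hkn, hk⟩ := Nat.find_spec hex
    have hneg : ∀ x < Nat.find hex, d x ≤ 0 := fun x hx =>
      (not_le.mp fun h => Nat.find_min hex hx ⟨by omega, h⟩).le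
    have hpos : ∀ x, Nat.find hex ≤ x → x ≤ n → 0 ≤ d x := by
      intro x hkx hxn
      induction x, hkx using Nat.le_induction with
      | base => exact hk
      | succ x _ ih => exact hd x (by omega) (ih (by omega))
    have := mul_sum_le_mul_sum_of_sign_change hpq hkn hneg hpos
    exact nonneg_of_mul_nonneg_right ((mul_nonneg (hq _ hkn) hdp).trans this) (hp _ hkn)
  · simp only [not_exists, not_and, not_le] at hex
    have : ∑ x ∈ range (n + 1), d x * p x < 0 :=
      sum_neg (fun x hx => mul_neg_of_neg_of_pos (hex x (Nat.lt_succ_iff.mp (mem_range.mp hx)))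
        (hp x (Nat.lt_succ_iff.mp (mem_range.mp hx)))) nonempty_range_add_one
    linarith

end SignChange

section Binomial

variable {n : ℕ} {θ θ₀ θ₁ : ℝ}

lemma binomPmf_nonneg (h₀ : 0 ≤ θ) (h₁ : θ ≤ 1) (x : ℕ) : 0 ≤ binomPmf n θ x := by
  have : 0 ≤ 1 - θ := by linarith
  unfold binomPmf
  positivity

lemma binomPmf_pos (h₀ : 0 < θ) (h₁ : θ < 1) {x : ℕ} (hx : x ≤ n) : 0 < binomPmf n θ x := by
  have : 0 < 1 - θ := by linarith
  have : (0 : ℝ) < n.choose x := by exact_mod_cast Nat.choose_pos hx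
  unfold binomPmf
  positivity

lemma binomPmf_mul_le_mul (hθ₀ : 0 ≤ θ₀) (hθ : θ₀ ≤ θ₁) (hθ₁ : θ₁ ≤ 1) {x y : ℕ}
    (hxy : x ≤ y) (hy : y ≤ n) :
    binomPmf n θ₁ x * binomPmf n θ₀ y ≤ binomPmf n θ₁ y * binomPmf n θ₀ x := by
  obtain ⟨d, rfl⟩ := Nat.exists_eq_add_of_le hxy
  obtain ⟨e, rfl⟩ := Nat.exists_eq_add_of_le hy
  have hcommon : 0 ≤ ((x + d + e).choose x : ℝ) * (x + d + e).choose (x + d) * θ₁ ^ x * θ₀ ^ x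
      * (1 - θ₁) ^ e * (1 - θ₀) ^ e := by
    have : 0 ≤ θ₁ := by linarith
    have : 0 ≤ 1 - θ₁ := by linarith
    have : 0 ≤ 1 - θ₀ := by linarith
    positivity
  have hratio : (θ₀ * (1 - θ₁)) ^ d ≤ (θ₁ * (1 - θ₀)) ^ d :=
    pow_le_pow_left₀ (mul_nonneg hθ₀ (by linarith)) (by nlinarith) d
  have hnx : x + d + e - x = d + e := by omega
  have hny : x + d + e - (x + d) = e := by omega
  simp only [binomPmf, hnx, hny]
  calc _ = _ * (θ₀ * (1 - θ₁)) ^ d := by rw [mul_pow]; ring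
    _ ≤ _ * (θ₁ * (1 - θ₀)) ^ d := mul_le_mul_of_nonneg_left hratio hcommon
    _ = _ := by rw [mul_pow]; ring

lemma binomPower_sub (φ ψ : ℕ → ℝ) :
    binomPower n ψ θ - binomPower n φ θ = ∑ x ∈ range (n + 1), (ψ x - φ x) * binomPmf n θ x := by
  simp only [binomPower, ← sum_sub_distrib, sub_mul]

end Binomial

theorem dp_ump_simple_general (ε α θ₀ θ₁ : ℝ) (n : ℕ) (hε : 0 < ε)
    (hθ₀ : 0 < θ₀) (hθ : θ₀ < θ₁) (hθ₁ : θ₁ < 1)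
    (m : ℝ)
    (hsize : binomPower n (fun x => tulapCdf0 (Real.exp (-ε)) ((x : ℝ) - m)) θ₀ = α) :
    IsDPTest ε n (fun x => tulapCdf0 (Real.exp (-ε)) ((x : ℝ) - m)) ∧
    ∀ φ : ℕ → ℝ, (∀ x ≤ n, φ x ∈ Set.Icc (0:ℝ) 1) → IsDPTest ε n φ →
      binomPower n φ θ₀ ≤ α →
      binomPower n φ θ₁ ≤ binomPower n (fun x => tulapCdf0 (Real.exp (-ε)) ((x : ℝ) - m)) θ₁ := by
  set ψ : ℕ → ℝ := fun x => tulapCdf0 (exp (-ε)) ((x : ℝ) - m)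
  have hb : 0 < exp (-ε) := exp_pos _
  have hb1 : exp (-ε) ≤ 1 := exp_le_one_iff.mpr (by linarith)
  have hψ : ∀ x, ψ (x + 1) = min (exp ε * ψ x) (1 - exp (-ε) * (1 - ψ x)) := fun x => by
    simp only [ψ]
    rw [Nat.cast_succ, add_sub_right_comm, tulapCdf0_add_one_s11 hb hb1, exp_neg, div_inv_eq_mul,
      mul_comm]
  refine ⟨isDPTest_of_succ_eq_min hε.le (fun x => tulapCdf0_mem_Icc hb hb1 _) hψ,
    fun φ _ hφ hlevel => ?_⟩
  rw [← sub_nonneg, binomPower_sub]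
  refine sum_mul_nonneg_of_sign_change
    (fun x y hxy hy => binomPmf_mul_le_mul hθ₀.le hθ.le hθ₁.le hxy hy)
    (fun x hx => binomPmf_pos hθ₀ (hθ.trans hθ₁) hx)
    (fun x _ => binomPmf_nonneg (hθ₀.trans hθ).le hθ₁.le x)
    (fun x hx hle => sub_nonneg.mpr (hφ.succ_le_of_le hx (hψ x) (sub_nonneg.mp hle))) ?_
  rw [← binomPower_sub, hsize]
  linarith

/-- DP Neyman–Pearson: the Tulap-cdf test `φ*_x = F_{N₀}(x-m)` calibrated to
size α at θ₀ is the uniformly most powerful level-α test of `θ = θ₀` vs `θ = θ₁` among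
all (ε,0)-DP tests. -/
theorem dp_ump_simple (ε α θ₀ θ₁ : ℝ) (n : ℕ) (hε : 0 < ε) (hα : α ∈ Set.Ioo (0:ℝ) 1)
    (hθ₀ : 0 < θ₀) (hθ : θ₀ < θ₁) (hθ₁ : θ₁ < 1) (hn : 1 ≤ n)
    (m : ℝ)
    (hsize : binomPower n (fun x => tulapCdf0 (Real.exp (-ε)) ((x : ℝ) - m)) θ₀ = α) :
    IsDPTest ε n (fun x => tulapCdf0 (Real.exp (-ε)) ((x : ℝ) - m)) ∧
    ∀ φ : ℕ → ℝ, (∀ x ≤ n, φ x ∈ Set.Icc (0:ℝ) 1) → IsDPTest ε n φ →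
      binomPower n φ θ₀ ≤ α →
      binomPower n φ θ₁ ≤ binomPower n (fun x => tulapCdf0 (Real.exp (-ε)) ((x : ℝ) - m)) θ₁ :=
  dp_ump_simple_general ε α θ₀ θ₁ n hε hθ₀ hθ hθ₁ m hsize
end

section
/- Let {μ_X : X ∈ X^n} be probability measures on ℝ absolutely continuous with respect to Lebesgue measure, parametrized by a statistic T(X) with monotone likelihood ratio in T(X). Then {μ_X} satisfies (ε,δ)-DP if and only if for all neighboring X₁, X₂ (Hamming distance 1) and all t ∈ ℝ: μ_{X₁}((−∞,t)) ≤ e^ε μ_{X₂}((−∞,t)) + δ and μ_{X₁}((t,∞)) ≤ e^ε μ_{X₂}((t,∞)) + δ. -/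
/-!
Fix neighbours `X₁, X₂` and write `c = exp ε`. The measurable set maximising
`μ_{X₁}(B) - c μ_{X₂}(B)` is the Neyman–Pearson region `{c f_{X₂} < f_{X₁}}`, and any set `S`
squeezed between `{c f_{X₂} < f_{X₁}}` and `{c f_{X₂} ≤ f_{X₁}}` maximises it as well. A monotone
likelihood ratio makes `c f_{X₂} ≤ f_{X₁}` persist to the right of every point where
`c f_{X₂} < f_{X₁}`, so the upper closure of the strict region is such an `S`. It is an upper
set of `ℝ`, hence a right half-line, up to an atom, or all of `ℝ`, a monotone limit of right
half-lines; either way the half-line bound gives the bound on `S`, and thus on every `B`.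
When the ratio is decreasing the same argument runs in `ℝᵒᵈ` with left half-lines.
-/

open MeasureTheory Set Filter
open scoped ENNReal

section NeymanPearson

variable {α : Type*} [MeasurableSpace α] {ρ : Measure α}

lemma withDensity_apply_le_of_forall_le {f g : α → ℝ≥0∞} {s : Set α} (hs : MeasurableSet s)
    (hfg : ∀ x ∈ s, f x ≤ g x) : ρ.withDensity f s ≤ ρ.withDensity g s := by
  rw [withDensity_apply _ hs, withDensity_apply _ hs]
  exact setLIntegral_mono' hs hfg

lemma withDensity_apply_le_add_of_sandwich {g₁ g₂ : α → ℝ≥0∞} {S : Set α} {δ : ℝ≥0∞}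
    (hS : MeasurableSet S) (hout : ∀ x ∉ S, g₁ x ≤ g₂ x) (hin : ∀ x ∈ S, g₂ x ≤ g₁ x)
    (hfin : ρ.withDensity g₂ S ≠ ∞) (hbound : ρ.withDensity g₁ S ≤ ρ.withDensity g₂ S + δ)
    {B : Set α} (hB : MeasurableSet B) : ρ.withDensity g₁ B ≤ ρ.withDensity g₂ B + δ := by
  set μ := ρ.withDensity g₁
  set ν := ρ.withDensity g₂
  have houtside : μ (B \ S) ≤ ν (B \ S) :=
    withDensity_apply_le_of_forall_le (hB.diff hS) fun x hx => hout x hx.2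
  have hinside : ν (S \ B) ≤ μ (S \ B) :=
    withDensity_apply_le_of_forall_le (hS.diff hB) fun x hx => hin x hx.1
  have hcap : μ (B ∩ S) ≤ ν (B ∩ S) + δ := by
    have hfin' : ν (S \ B) ≠ ∞ := measure_ne_top_of_subset sdiff_subset hfin
    refine ENNReal.le_of_add_le_add_right hfin' ?_
    calc μ (B ∩ S) + ν (S \ B) ≤ μ (B ∩ S) + μ (S \ B) := add_le_add_right hinside _
      _ = μ S := by rw [inter_comm]; exact measure_inter_add_sdiff S hB
      _ ≤ ν S + δ := hbound
      _ = ν (B ∩ S) + δ + ν (S \ B) := by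
        rw [← measure_inter_add_sdiff S hB, inter_comm]; ring
  calc μ B = μ (B ∩ S) + μ (B \ S) := (measure_inter_add_sdiff B hS).symm
    _ ≤ ν (B ∩ S) + δ + ν (B \ S) := add_le_add hcap houtside
    _ = ν B + δ := by rw [← measure_inter_add_sdiff B hS]; ring

end NeymanPearson

section UpperSet

variable {α : Type*} [ConditionallyCompleteLinearOrder α] [MeasurableSpace α]
  {μ ν : Measure α} {δ : ℝ≥0∞}

lemma IsUpperSet.measure_le_add_of_Ioi [(atBot : Filter α).IsCountablyGenerated]
    [NullSingletonClass μ] (h : ∀ t, μ (Ioi t) ≤ ν (Ioi t) + δ) {S : Set α}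
    (hS : IsUpperSet S) : μ S ≤ ν S + δ := by
  rcases S.eq_empty_or_nonempty with rfl | hne
  · simp
  have hIci : ∀ a, Ioi a ⊆ S → μ (Ici a) ≤ ν S + δ := fun a ha =>
    calc μ (Ici a) = μ (Ioi a) := measure_congr Ioi_ae_eq_Ici.symm
      _ ≤ ν (Ioi a) + δ := h a
      _ ≤ ν S + δ := by gcongr
  by_cases hbdd : BddBelow S
  · refine (measure_mono fun x hx => ?_).trans (hIci (sInf S) fun x hx => ?_)
    · exact csInf_le hbdd hx
    · obtain ⟨s, hs, hsx⟩ := (csInf_lt_iff hbdd hne).1 hx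
      exact hS hsx.le hs
  · obtain rfl : S = univ := eq_univ_of_forall fun x => by
      obtain ⟨s, hs, hsx⟩ := not_bddBelow_iff.1 hbdd x
      exact hS hsx.le hs
    exact le_of_tendsto' (tendsto_measure_Ici_atBot μ) fun a => hIci a (subset_univ _)

variable [TopologicalSpace α] [OrderTopology α] [OpensMeasurableSpace α]

lemma withDensity_apply_le_add_of_Ioi [(atBot : Filter α).IsCountablyGenerated]
    {ρ : Measure α} [NullSingletonClass ρ] {g₁ g₂ : α → ℝ≥0∞}
    (hcross : ∀ x y, x ≤ y → g₂ x < g₁ x → g₂ y ≤ g₁ y) (hfin : ρ.withDensity g₂ univ ≠ ∞)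
    (h : ∀ t, ρ.withDensity g₁ (Ioi t) ≤ ρ.withDensity g₂ (Ioi t) + δ)
    {B : Set α} (hB : MeasurableSet B) : ρ.withDensity g₁ B ≤ ρ.withDensity g₂ B + δ := by
  let S := upperClosure {x | g₂ x < g₁ x}
  refine withDensity_apply_le_add_of_sandwich S.upper.ordConnected.measurableSet
    (fun x hx => not_lt.1 fun hlt => hx (subset_upperClosure hlt)) (fun x hx => ?_)
    (measure_ne_top_of_subset (subset_univ _) hfin) (S.upper.measure_le_add_of_Ioi h) hB
  obtain ⟨u, hu, hux⟩ := mem_upperClosure.1 hx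
  exact hcross u x hux hu

end UpperSet

section MonotoneLikelihoodRatio

variable {α : Type*} [Preorder α]

/-- `f₁ / f₂` is nondecreasing, in cross-multiplied form so that zeros of `f₂` are allowed. -/
def MonotoneLikelihoodRatio (f₁ f₂ : α → ℝ) : Prop :=
  ∀ s t, s ≤ t → f₁ s * f₂ t ≤ f₁ t * f₂ s

lemma MonotoneLikelihoodRatio.mul_le_of_mul_lt {f₁ f₂ : α → ℝ}
    (h : MonotoneLikelihoodRatio f₁ f₂) (hf₁ : ∀ x, 0 ≤ f₁ x) (hf₂ : ∀ x, 0 ≤ f₂ x) {c : ℝ}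
    {x y : α} (hxy : x ≤ y) (hx : c * f₂ x < f₁ x) : c * f₂ y ≤ f₁ y := by
  rcases (hf₂ y).eq_or_lt with hy | hy
  · simp [← hy, hf₁ y]
  · by_contra! hlt
    nlinarith [h x y hxy, mul_lt_mul_of_pos_right (sub_pos.2 hx) hy,
      mul_le_mul_of_nonneg_right hlt.le (hf₂ x)]

lemma MonotoneLikelihoodRatio.ofReal_le_of_ofReal_lt {f₁ f₂ : α → ℝ}
    (h : MonotoneLikelihoodRatio f₁ f₂) (hf₁ : ∀ x, 0 ≤ f₁ x) (hf₂ : ∀ x, 0 ≤ f₂ x) (c : ℝ)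
    (x y : α) (hxy : x ≤ y) (hx : ENNReal.ofReal (c * f₂ x) < ENNReal.ofReal (f₁ x)) :
    ENNReal.ofReal (c * f₂ y) ≤ ENNReal.ofReal (f₁ y) :=
  ENNReal.ofReal_le_ofReal <| h.mul_le_of_mul_lt hf₁ hf₂ hxy (ENNReal.ofReal_lt_ofReal_iff'.1 hx).1

end MonotoneLikelihoodRatio

theorem dp_iff_halflines_general {𝒳 : Type*} [DecidableEq 𝒳] {n : ℕ} (ε δ : ℝ)
    (T : (Fin n → 𝒳) → ℝ) (μ : (Fin n → 𝒳) → Measure ℝ)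
    [∀ X, IsProbabilityMeasure (μ X)]
    (f : (Fin n → 𝒳) → ℝ → ℝ) (hf0 : ∀ X t, 0 ≤ f X t) (hfm : ∀ X, Measurable (f X))
    (hdens : ∀ X, μ X = MeasureTheory.volume.withDensity (fun t => ENNReal.ofReal (f X t)))
    (hMLR : ∀ X₁ X₂, T X₂ ≤ T X₁ → ∀ s t : ℝ, s ≤ t →
      f X₁ s * f X₂ t ≤ f X₁ t * f X₂ s) :
    ((∀ X₁ X₂ : Fin n → 𝒳, hammingDist X₁ X₂ = 1 → ∀ B : Set ℝ, MeasurableSet B →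
        μ X₁ B ≤ ENNReal.ofReal (Real.exp ε) * μ X₂ B + ENNReal.ofReal δ) ↔
      (∀ X₁ X₂ : Fin n → 𝒳, hammingDist X₁ X₂ = 1 → ∀ t : ℝ,
        μ X₁ (Set.Iio t) ≤ ENNReal.ofReal (Real.exp ε) * μ X₂ (Set.Iio t) + ENNReal.ofReal δ ∧
        μ X₁ (Set.Ioi t) ≤ ENNReal.ofReal (Real.exp ε) * μ X₂ (Set.Ioi t) + ENNReal.ofReal δ)) := by
  refine ⟨fun h X₁ X₂ hX t => ⟨h X₁ X₂ hX _ measurableSet_Iio, h X₁ X₂ hX _ measurableSet_Ioi⟩, ?_⟩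
  intro h X₁ X₂ hX B hB
  obtain ⟨hIio, hIoi⟩ := forall_and.1 (h X₁ X₂ hX)
  have hscale : ∀ A, ENNReal.ofReal (Real.exp ε) * μ X₂ A =
      volume.withDensity (fun t => ENNReal.ofReal (Real.exp ε * f X₂ t)) A := fun A => by
    have hdensity : (fun t => ENNReal.ofReal (Real.exp ε * f X₂ t)) =
        ENNReal.ofReal (Real.exp ε) • fun t => ENNReal.ofReal (f X₂ t) := by
      ext t
      simp [ENNReal.ofReal_mul (Real.exp_pos ε).le]
    rw [hdens X₂, hdensity, withDensity_smul _ (hfm X₂).ennreal_ofReal, Measure.smul_apply,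
      smul_eq_mul]
  have hfin := hscale univ ▸ ENNReal.mul_ne_top ENNReal.ofReal_ne_top (measure_ne_top (μ X₂) _)
  simp only [hscale, hdens X₁] at hIio hIoi ⊢
  rcases le_total (T X₂) (T X₁) with hT | hT
  · exact withDensity_apply_le_add_of_Ioi
      (MonotoneLikelihoodRatio.ofReal_le_of_ofReal_lt (hMLR X₁ X₂ hT) (hf0 X₁) (hf0 X₂) _)
      hfin hIoi hB
  · have hMLR_dual : MonotoneLikelihoodRatio (α := ℝᵒᵈ) (f X₁) (f X₂) := fun s t hst => by
      linear_combination hMLR X₂ X₁ hT t s hst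
    have : NullSingletonClass (α := ℝᵒᵈ) (volume : Measure ℝ) :=
      inferInstanceAs (NullSingletonClass (volume : Measure ℝ))
    exact withDensity_apply_le_add_of_Ioi (α := ℝᵒᵈ) (ρ := (volume : Measure ℝ))
      (hMLR_dual.ofReal_le_of_ofReal_lt (hf0 X₁) (hf0 X₂) _) hfin
      (fun t => hIio (OrderDual.ofDual t)) hB

/-- for a family of Lebesgue-absolutely-continuous distributions on ℝ
parametrized by a statistic `T` with monotone likelihood ratio in `T`, the (ε,δ)-DP
condition over all measurable sets is equivalent to the (ε,δ)-DP condition over all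
half-lines. -/
theorem dp_iff_halflines {𝒳 : Type*} [DecidableEq 𝒳] {n : ℕ} (ε δ : ℝ)
    (T : (Fin n → 𝒳) → ℝ) (μ : (Fin n → 𝒳) → Measure ℝ)
    [∀ X, IsProbabilityMeasure (μ X)]
    (f : (Fin n → 𝒳) → ℝ → ℝ) (hf0 : ∀ X t, 0 ≤ f X t) (hfm : ∀ X, Measurable (f X))
    (hdens : ∀ X, μ X = MeasureTheory.volume.withDensity (fun t => ENNReal.ofReal (f X t)))
    (hparam : ∀ X₁ X₂, T X₁ = T X₂ → μ X₁ = μ X₂)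
    (hMLR : ∀ X₁ X₂, T X₂ ≤ T X₁ → ∀ s t : ℝ, s ≤ t →
      f X₁ s * f X₂ t ≤ f X₁ t * f X₂ s) :
    ((∀ X₁ X₂ : Fin n → 𝒳, hammingDist X₁ X₂ = 1 → ∀ B : Set ℝ, MeasurableSet B →
        μ X₁ B ≤ ENNReal.ofReal (Real.exp ε) * μ X₂ B + ENNReal.ofReal δ) ↔
      (∀ X₁ X₂ : Fin n → 𝒳, hammingDist X₁ X₂ = 1 → ∀ t : ℝ,
        μ X₁ (Set.Iio t) ≤ ENNReal.ofReal (Real.exp ε) * μ X₂ (Set.Iio t) + ENNReal.ofReal δ ∧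
        μ X₁ (Set.Ioi t) ≤ ENNReal.ofReal (Real.exp ε) * μ X₂ (Set.Ioi t) + ENNReal.ofReal δ)) :=
  dp_iff_halflines_general ε δ T μ f hf0 hfm hdens hMLR
end
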